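/- Assume E[Y²] < ∞, |Q_#| ≤ M, |Q_*| ≤ M, and |Q̂| ≤ M almost surely, for a constant M > 0. Let Z be the real random variable Z(ω′) := P_* T(Q̂_{ω′})². Then E[(Z − E[Z])²] ≤ 16·M²·E[ E(((1 − π(X))/π(X))²·(Q̂(X) − Q_#(X))²) ] ≤ 16·M²·((1 − τ)/τ)²·E‖Q̂ − Q_#‖₂², where the inner expectation is over X for a fixed realization of Q̂ and the outer expectation is over Q̂. -/

import Mathlib

open MeasureTheory ProbabilityTheory

noncomputable section

/-- The AIPW transformation `T(Q)(x, a′, y) = 1{a′=a}·(y − Q(x))/π(x) + Q(x)`. -/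
def Taipw {𝒳 : Type*} (ps : 𝒳 → ℝ) (a : Bool) (Q : 𝒳 → ℝ) (v : 𝒳 × Bool × ℝ) : ℝ :=
  (if v.2.1 = a then (1 : ℝ) else 0) * (v.2.2 - Q v.1) / ps v.1 + Q v.1

/-!
Conditioning on `X` and using `E[1{A=a} | X] = π(X)` and `E[1{A=a}·Y | X] = π(X)·Q_*(X)`, the
second moment of `T(Q)` differs from that of `T(Q_#)` by an expectation over `X` alone:
`P_* T(Q)² - P_* T(Q_#)² = E[(Q - Q_#)(Q + Q_# - 2 Q_*)·(1 - π)/π]`.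
Since `|Q + Q_# - 2 Q_*| ≤ 4M`, Jensen's inequality bounds its square by
`16 M² E[((1 - π)/π)² (Q - Q_#)²]` for every realization `Q = Q̂`. The variance of `Z` is at most
its mean squared deviation from the constant `P_* T(Q_#)²`, which gives the first bound; the
second is `(1 - π)/π ≤ (1 - τ)/τ`.
-/

open Set
open scoped ENNReal

lemma sq_integral_le_integral_sq {Ω : Type*} [MeasurableSpace Ω] {μ : Measure Ω}
    [IsProbabilityMeasure μ] {f : Ω → ℝ} (hf : MemLp f 2 μ) :
    (∫ ω, f ω ∂μ) ^ 2 ≤ ∫ ω, f ω ^ 2 ∂μ := by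
  have h := variance_nonneg f μ
  rw [variance_eq_sub hf] at h
  simpa only [Pi.pow_apply, sub_nonneg] using h

lemma integral_sq_sub_integral_le_integral_sq_sub {Ω : Type*} [MeasurableSpace Ω]
    {μ : Measure Ω} [IsProbabilityMeasure μ] {Z : Ω → ℝ} (hZ : AEStronglyMeasurable Z μ) (c : ℝ) :
    ∫ ω, (Z ω - ∫ ω', Z ω' ∂μ) ^ 2 ∂μ ≤ ∫ ω, (Z ω - c) ^ 2 ∂μ := by
  rw [← variance_eq_integral hZ.aemeasurable, ← variance_sub_const hZ c]
  exact variance_le_expectation_sq (hZ.sub aestronglyMeasurable_const)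

section CompOfMeasurable

variable {Ω 𝒳 : Type*} [MeasurableSpace Ω] [MeasurableSpace 𝒳] {P : Measure Ω} {X : Ω → 𝒳}
  {g g₁ g₂ : 𝒳 → ℝ} {f f₁ f₂ h h₁ h₂ : Ω → ℝ}

lemma memLp_comp_of_abs_le [IsFiniteMeasure P] (hX : Measurable X) (hg : Measurable g) {C : ℝ}
    (hgC : ∀ x, |g x| ≤ C) (p : ℝ≥0∞) :
    MemLp (fun ω => g (X ω)) p P :=
  .of_bound (hg.comp hX).aestronglyMeasurable C (ae_of_all _ fun ω => hgC (X ω))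

lemma integral_comp_mul_eq_of_condExp_eq [IsFiniteMeasure P] (hX : Measurable X)
    (hg : Measurable g) (hgX : MemLp (fun ω => g (X ω)) ∞ P) (hf : Integrable f P)
    (hfh : P[f | MeasurableSpace.comap X inferInstance] =ᵐ[P] h) :
    ∫ ω, g (X ω) * f ω ∂P = ∫ ω, g (X ω) * h ω ∂P := by
  have hgX_meas : StronglyMeasurable[MeasurableSpace.comap X inferInstance]
      (fun ω => g (X ω)) :=
    (hg.comp (comap_measurable X)).stronglyMeasurable
  calc ∫ ω, g (X ω) * f ω ∂P
      = ∫ ω, (P[(fun ω => g (X ω)) * f | MeasurableSpace.comap X inferInstance]) ω ∂P :=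
        (integral_condExp hX.comap_le).symm
    _ = ∫ ω, g (X ω) * h ω ∂P := by
        refine integral_congr_ae ?_
        filter_upwards [condExp_mul_of_stronglyMeasurable_left hgX_meas
          (hf.mul_of_top_right hgX) hf, hfh] with ω h₁ h₂
        rw [h₁, Pi.mul_apply, h₂]

lemma integrable_comp_mul_of_condExp_eq (hgX : MemLp (fun ω => g (X ω)) ∞ P)
    (hfh : P[f | MeasurableSpace.comap X inferInstance] =ᵐ[P] h) :
    Integrable (fun ω => g (X ω) * h ω) P :=
  (integrable_condExp.congr hfh).mul_of_top_right hgX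

lemma integral_comp_mul_add_comp_mul_eq_of_condExp_eq [IsFiniteMeasure P] (hX : Measurable X)
    (hg₁ : Measurable g₁) (hg₂ : Measurable g₂)
    (hg₁X : MemLp (fun ω => g₁ (X ω)) ∞ P) (hg₂X : MemLp (fun ω => g₂ (X ω)) ∞ P)
    (hf₁ : Integrable f₁ P) (hf₂ : Integrable f₂ P)
    (hfh₁ : P[f₁ | MeasurableSpace.comap X inferInstance] =ᵐ[P] h₁)
    (hfh₂ : P[f₂ | MeasurableSpace.comap X inferInstance] =ᵐ[P] h₂) :
    ∫ ω, g₁ (X ω) * f₁ ω + g₂ (X ω) * f₂ ω ∂P = ∫ ω, g₁ (X ω) * h₁ ω + g₂ (X ω) * h₂ ω ∂P := by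
  have hgf₁ : Integrable (fun ω => g₁ (X ω) * f₁ ω) P := hf₁.mul_of_top_right hg₁X
  have hgf₂ : Integrable (fun ω => g₂ (X ω) * f₂ ω) P := hf₂.mul_of_top_right hg₂X
  rw [integral_add hgf₁ hgf₂, integral_add (integrable_comp_mul_of_condExp_eq hg₁X hfh₁)
    (integrable_comp_mul_of_condExp_eq hg₂X hfh₂), integral_comp_mul_eq_of_condExp_eq hX hg₁ hg₁X
    hf₁ hfh₁, integral_comp_mul_eq_of_condExp_eq hX hg₂ hg₂X hf₂ hfh₂]

end CompOfMeasurable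

lemma integrable_integral_of_abs_le {Ω Ω' : Type*} [MeasurableSpace Ω] [MeasurableSpace Ω']
    {P : Measure Ω} [IsFiniteMeasure P] {P' : Measure Ω'} [IsFiniteMeasure P']
    {F : Ω' → Ω → ℝ} (hF : StronglyMeasurable (Function.uncurry F)) {C : ℝ}
    (hFC : ∀ᵐ ω' ∂P', ∀ ω, |F ω' ω| ≤ C) :
    Integrable (fun ω' => ∫ ω, F ω' ω ∂P) P' := by
  refine .of_bound hF.integral_prod_right.aestronglyMeasurable (C * P.real univ) ?_
  filter_upwards [hFC] with ω' h
  exact norm_integral_le_of_norm_le_const (ae_of_all _ h)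

lemma abs_sub_le_two_mul {q r M : ℝ} (hq : |q| ≤ M) (hr : |r| ≤ M) : |q - r| ≤ 2 * M := by
  linarith [abs_sub q r]

lemma abs_one_sub_div_le {τ p : ℝ} (hτ : 0 < τ) (hp : p ∈ Icc τ 1) :
    |(1 - p) / p| ≤ (1 - τ) / τ := by
  have hp₀ : 0 < p := hτ.trans_le hp.1
  rw [abs_of_nonneg (div_nonneg (by linarith [hp.2]) hp₀.le)]
  exact div_le_div₀ (by linarith [hp.1, hp.2]) (by linarith [hp.1]) hτ hp.1

section OneSubDivWeight

variable {Ω Ω' : Type*} [MeasurableSpace Ω] [MeasurableSpace Ω'] {P : Measure Ω}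
  {P' : Measure Ω'} {τ C : ℝ} {p : Ω → ℝ} {F : Ω' → Ω → ℝ}

lemma integral_one_sub_div_sq_mul_le {f : Ω → ℝ} (hτ : 0 < τ) (hp : ∀ ω, p ω ∈ Icc τ 1)
    (hf₀ : 0 ≤ f) (hf : Integrable f P) :
    ∫ ω, ((1 - p ω) / p ω) ^ 2 * f ω ∂P ≤ ((1 - τ) / τ) ^ 2 * ∫ ω, f ω ∂P := by
  rw [← integral_const_mul]
  refine integral_mono_of_nonneg (ae_of_all _ fun ω => mul_nonneg (sq_nonneg _) (hf₀ ω))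
    (hf.const_mul _) (ae_of_all _ fun ω => ?_)
  exact mul_le_mul_of_nonneg_right
    (sq_le_sq.2 ((abs_one_sub_div_le hτ (hp ω)).trans (le_abs_self _))) (hf₀ ω)

lemma integrable_integral_one_sub_div_sq_mul [IsFiniteMeasure P] [IsFiniteMeasure P']
    (hτ : 0 < τ) (hpm : Measurable p) (hp : ∀ ω, p ω ∈ Icc τ 1)
    (hF : Measurable (Function.uncurry F)) (hFC : ∀ᵐ ω' ∂P', ∀ ω, |F ω' ω| ≤ C) :
    Integrable (fun ω' => ∫ ω, ((1 - p ω) / p ω) ^ 2 * F ω' ω ∂P) P' := by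
  refine integrable_integral_of_abs_le (C := ((1 - τ) / τ) ^ 2 * C)
    (by fun_prop : Measurable _).stronglyMeasurable ?_
  filter_upwards [hFC] with ω' h ω
  rw [abs_mul, abs_of_nonneg (sq_nonneg _)]
  exact mul_le_mul (sq_le_sq.2 ((abs_one_sub_div_le hτ (hp ω)).trans (le_abs_self _))) (h ω)
    (abs_nonneg _) (sq_nonneg _)

lemma integral_integral_one_sub_div_sq_mul_le [IsFiniteMeasure P] [IsFiniteMeasure P']
    (hτ : 0 < τ) (hpm : Measurable p) (hp : ∀ ω, p ω ∈ Icc τ 1)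
    (hF : Measurable (Function.uncurry F)) (hF₀ : ∀ ω' ω, 0 ≤ F ω' ω)
    (hFC : ∀ᵐ ω' ∂P', ∀ ω, |F ω' ω| ≤ C) :
    ∫ ω', ∫ ω, ((1 - p ω) / p ω) ^ 2 * F ω' ω ∂P ∂P'
      ≤ ((1 - τ) / τ) ^ 2 * ∫ ω', ∫ ω, F ω' ω ∂P ∂P' := by
  have hFint : Integrable (fun ω' => ∫ ω, F ω' ω ∂P) P' :=
    integrable_integral_of_abs_le hF.stronglyMeasurable hFC
  rw [← integral_const_mul]
  refine integral_mono_ae (integrable_integral_one_sub_div_sq_mul hτ hpm hp hF hFC)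
    (hFint.const_mul _) ?_
  filter_upwards [hFC] with ω' h
  exact integral_one_sub_div_sq_mul_le hτ hp (hF₀ ω')
    (.of_bound (hF.comp measurable_prodMk_left).aestronglyMeasurable C (ae_of_all _ h))

end OneSubDivWeight

/-- Each summand is a function of `x` times `1{b=a}·y`, `1{b=a}` or `1`: the three quantities
whose conditional expectations given `X` are known. -/
lemma Taipw_sq_sub_Taipw_sq {𝒳 : Type*} (ps : 𝒳 → ℝ) (a : Bool) (Q R : 𝒳 → ℝ) {x : 𝒳}
    (hx : ps x ≠ 0) (b : Bool) (y : ℝ) :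
    Taipw ps a Q (x, b, y) ^ 2 - Taipw ps a R (x, b, y) ^ 2
      = -2 * (Q x - R x) * ((1 - ps x) / ps x) * (ps x)⁻¹ * ((if b = a then 1 else 0) * y)
        + (Q x - R x) * (Q x + R x) * ((1 - ps x) / ps x - 1) * (ps x)⁻¹
          * (if b = a then 1 else 0)
        + (Q x - R x) * (Q x + R x) := by
  unfold Taipw
  split_ifs <;> field_simp <;> ring

section AIPW

variable {𝒳 Ω : Type*} [MeasurableSpace 𝒳] [MeasurableSpace Ω] {P : Measure Ω}
  {X : Ω → 𝒳} {A : Ω → Bool} {Y : Ω → ℝ} {a : Bool} {ps : 𝒳 → ℝ}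
  {τ M : ℝ} {Q R : 𝒳 → ℝ}

lemma memLp_top_inv_comp [IsFiniteMeasure P] (hX : Measurable X) (hps : Measurable ps)
    (hτ : 0 < τ) (hpsτ : ∀ x, τ ≤ ps x) : MemLp (fun ω => (ps (X ω))⁻¹) ∞ P :=
  memLp_comp_of_abs_le hX (g := fun x => (ps x)⁻¹) hps.inv (C := τ⁻¹) (fun x => by
    rw [abs_inv, abs_of_pos (hτ.trans_le (hpsτ x))]
    exact inv_anti₀ hτ (hpsτ x)) ∞

lemma measurable_ite_one_zero (hA : Measurable A) :
    Measurable fun ω => if A ω = a then (1 : ℝ) else 0 :=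
  (Measurable.of_discrete (f := fun b : Bool => if b = a then (1 : ℝ) else 0)).comp hA

lemma memLp_top_ite_one_zero (hA : Measurable A) :
    MemLp (fun ω => if A ω = a then (1 : ℝ) else 0) ∞ P :=
  memLp_top_of_bound (measurable_ite_one_zero hA).aestronglyMeasurable 1
    (ae_of_all _ fun ω => by split_ifs <;> simp)

lemma memLp_two_Taipw [IsFiniteMeasure P] (hX : Measurable X) (hA : Measurable A)
    (hY : MemLp Y 2 P) (hps : Measurable ps) (hτ : 0 < τ) (hpsτ : ∀ x, τ ≤ ps x) (hQ : Measurable Q)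
    (hQM : ∀ x, |Q x| ≤ M) :
    MemLp (fun ω => Taipw ps a Q (X ω, A ω, Y ω)) 2 P := by
  have hQX := memLp_comp_of_abs_le (P := P) hX hQ hQM
  exact ((memLp_top_inv_comp hX hps hτ hpsτ).mul' (r := 2)
    ((hY.sub (hQX 2)).mul' (r := 2) (memLp_top_ite_one_zero hA))).add (hQX 2)

theorem integral_sq_Taipw_sub_integral_sq_Taipw [IsFiniteMeasure P]
    (hX : Measurable X) (hA : Measurable A) (hY : MemLp Y 2 P) (hps : Measurable ps)
    (hτ : 0 < τ) (hpsτ : ∀ x, ps x ∈ Icc τ 1)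
    (hprop : P[(fun ω => if A ω = a then (1 : ℝ) else 0) |
        MeasurableSpace.comap X inferInstance] =ᵐ[P] fun ω => ps (X ω))
    {Qstar : 𝒳 → ℝ}
    (houtcome : P[(fun ω => (if A ω = a then (1 : ℝ) else 0) * Y ω) |
        MeasurableSpace.comap X inferInstance] =ᵐ[P] fun ω => ps (X ω) * Qstar (X ω))
    (hQ : Measurable Q) (hQM : ∀ x, |Q x| ≤ M) (hR : Measurable R) (hRM : ∀ x, |R x| ≤ M) :
    ∫ ω, Taipw ps a Q (X ω, A ω, Y ω) ^ 2 ∂P - ∫ ω, Taipw ps a R (X ω, A ω, Y ω) ^ 2 ∂P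
      = ∫ ω, (Q (X ω) - R (X ω)) * (Q (X ω) + R (X ω) - 2 * Qstar (X ω))
          * ((1 - ps (X ω)) / ps (X ω)) ∂P := by
  have hps₀ : ∀ x, ps x ≠ 0 := fun x => (hτ.trans_le (hpsτ x).1).ne'
  set ind : Ω → ℝ := fun ω => if A ω = a then 1 else 0
  set w : 𝒳 → ℝ := fun x => (1 - ps x) / ps x with hw
  set c₂ : 𝒳 → ℝ := fun x => (Q x - R x) * (Q x + R x) with hc₂
  set c₁ : 𝒳 → ℝ := fun x => -2 * (Q x - R x) * w x * (ps x)⁻¹ with hc₁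
  set c₃ : 𝒳 → ℝ := fun x => c₂ x * (w x - 1) * (ps x)⁻¹ with hc₃
  have bdd {g : 𝒳 → ℝ} (hg : Measurable g) {C : ℝ} (hgC : ∀ x, |g x| ≤ C) :=
    memLp_comp_of_abs_le (P := P) hX hg hgC ∞
  have hinv := memLp_top_inv_comp (P := P) hX hps hτ fun x => (hpsτ x).1
  have hwX : MemLp (fun ω => w (X ω)) ∞ P :=
    bdd (by fun_prop) fun x => abs_one_sub_div_le hτ (hpsτ x)
  have hQX := bdd hQ hQM
  have hRX := bdd hR hRM
  have hc₂X : MemLp (fun ω => c₂ (X ω)) ∞ P := (hQX.add hRX).mul' (r := ∞) (hQX.sub hRX)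
  have hc₁X : MemLp (fun ω => c₁ (X ω)) ∞ P :=
    hinv.mul' (r := ∞) (hwX.mul' (r := ∞) ((hQX.sub hRX).const_mul (-2)))
  have hc₃X : MemLp (fun ω => c₃ (X ω)) ∞ P :=
    hinv.mul' (r := ∞) ((hwX.sub (memLp_const 1)).mul' (r := ∞) hc₂X)
  have hind : MemLp ind ∞ P := memLp_top_ite_one_zero hA
  have hindY : Integrable (fun ω => ind ω * Y ω) P :=
    (hY.integrable one_le_two).mul_of_top_right hind
  have hT (S : 𝒳 → ℝ) (hS : Measurable S) (hSM : ∀ x, |S x| ≤ M) :=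
    (memLp_two_Taipw (a := a) hX hA hY hps hτ (fun x => (hpsτ x).1) hS hSM).integrable_sq
  have hc₁₃ : Integrable (fun ω => c₁ (X ω) * (ind ω * Y ω) + c₃ (X ω) * ind ω) P :=
    (hindY.mul_of_top_right hc₁X).add ((hind.integrable le_top).mul_of_top_right hc₃X)
  have hc₁₃' : Integrable
      (fun ω => c₁ (X ω) * (ps (X ω) * Qstar (X ω)) + c₃ (X ω) * ps (X ω)) P :=
    (integrable_comp_mul_of_condExp_eq hc₁X houtcome).add
      (integrable_comp_mul_of_condExp_eq hc₃X hprop)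
  calc _ = ∫ ω, c₁ (X ω) * (ind ω * Y ω) + c₃ (X ω) * ind ω ∂P + ∫ ω, c₂ (X ω) ∂P := by
        rw [← integral_sub (hT Q hQ hQM) (hT R hR hRM),
          ← integral_add hc₁₃ (hc₂X.integrable le_top)]
        exact integral_congr_ae (ae_of_all _ fun ω =>
          Taipw_sq_sub_Taipw_sq ps a Q R (hps₀ (X ω)) (A ω) (Y ω))
    _ = ∫ ω, c₁ (X ω) * (ps (X ω) * Qstar (X ω)) + c₃ (X ω) * ps (X ω) ∂P
          + ∫ ω, c₂ (X ω) ∂P := by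
        rw [integral_comp_mul_add_comp_mul_eq_of_condExp_eq hX (by fun_prop) (by fun_prop)
          hc₁X hc₃X hindY (hind.integrable le_top) houtcome hprop]
    _ = _ := by
        rw [← integral_add hc₁₃' (hc₂X.integrable le_top)]
        refine integral_congr_ae (ae_of_all _ fun ω => ?_)
        simp only [hc₁, hc₂, hc₃, hw]
        field_simp [hps₀ (X ω)]
        ring

lemma stronglyMeasurable_integral_sq_Taipw {Ω' : Type*} [MeasurableSpace Ω'] [SFinite P]
    (hX : Measurable X) (hA : Measurable A) (hY : Measurable Y) (hps : Measurable ps)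
    {Qhat : Ω' → 𝒳 → ℝ} (hQhat : Measurable (Function.uncurry Qhat)) :
    StronglyMeasurable fun ω' => ∫ ω, Taipw ps a (Qhat ω') (X ω, A ω, Y ω) ^ 2 ∂P := by
  have hind : Measurable fun p : Ω' × Ω => if A p.2 = a then (1 : ℝ) else 0 :=
    measurable_ite_one_zero (hA.comp measurable_snd)
  exact StronglyMeasurable.integral_prod_right
    (by simp only [Taipw]; fun_prop : Measurable _).stronglyMeasurable

theorem sq_integral_sq_Taipw_sub_le [IsProbabilityMeasure P]
    (hX : Measurable X) (hA : Measurable A) (hY : MemLp Y 2 P) (hps : Measurable ps)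
    (hτ : 0 < τ) (hpsτ : ∀ x, ps x ∈ Icc τ 1)
    (hprop : P[(fun ω => if A ω = a then (1 : ℝ) else 0) |
        MeasurableSpace.comap X inferInstance] =ᵐ[P] fun ω => ps (X ω))
    {Qstar : 𝒳 → ℝ} (hQstar : Measurable Qstar) (hQstarM : ∀ x, |Qstar x| ≤ M)
    (houtcome : P[(fun ω => (if A ω = a then (1 : ℝ) else 0) * Y ω) |
        MeasurableSpace.comap X inferInstance] =ᵐ[P] fun ω => ps (X ω) * Qstar (X ω))
    (hQ : Measurable Q) (hQM : ∀ x, |Q x| ≤ M) (hR : Measurable R) (hRM : ∀ x, |R x| ≤ M) :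
    (∫ ω, Taipw ps a Q (X ω, A ω, Y ω) ^ 2 ∂P - ∫ ω, Taipw ps a R (X ω, A ω, Y ω) ^ 2 ∂P) ^ 2
      ≤ 16 * M ^ 2 * ∫ ω, ((1 - ps (X ω)) / ps (X ω)) ^ 2 * (Q (X ω) - R (X ω)) ^ 2 ∂P := by
  have bdd {g : 𝒳 → ℝ} (hg : Measurable g) {C : ℝ} (hgC : ∀ x, |g x| ≤ C) :=
    memLp_comp_of_abs_le (P := P) hX hg hgC
  have hw (x : 𝒳) := abs_one_sub_div_le hτ (hpsτ x)
  have hd (x : 𝒳) := abs_sub_le_two_mul (hQM x) (hRM x)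
  have hs (x : 𝒳) : |Q x + R x - 2 * Qstar x| ≤ 4 * M := by
    have := abs_le.1 (hQM x); have := abs_le.1 (hRM x); have := abs_le.1 (hQstarM x)
    exact abs_le.2 ⟨by linarith, by linarith⟩
  rw [integral_sq_Taipw_sub_integral_sq_Taipw hX hA hY hps hτ hpsτ hprop houtcome hQ hQM hR
    hRM, ← integral_const_mul]
  have hφ : MemLp (fun ω => (Q (X ω) - R (X ω)) * (Q (X ω) + R (X ω) - 2 * Qstar (X ω))
      * ((1 - ps (X ω)) / ps (X ω))) 2 P :=
    (bdd (by fun_prop) hw ∞).mul' (r := 2) ((bdd (by fun_prop) hs ∞).mul' (r := 2)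
      (bdd (by fun_prop) hd 2))
  refine (sq_integral_le_integral_sq hφ).trans (integral_mono_of_nonneg
    (ae_of_all _ fun _ => sq_nonneg _) ?_ (ae_of_all _ fun ω => ?_))
  · refine ((bdd (g := fun x => ((1 - ps x) / ps x) ^ 2 * (Q x - R x) ^ 2)
      (C := ((1 - τ) / τ) ^ 2 * (2 * M) ^ 2) (by fun_prop) (fun x => ?_) ∞).const_mul
      (16 * M ^ 2)).integrable le_top
    rw [abs_of_nonneg (by positivity)]
    exact mul_le_mul (sq_le_sq.2 ((hw x).trans (le_abs_self _)))
      (sq_le_sq.2 ((hd x).trans (le_abs_self _))) (sq_nonneg _) (sq_nonneg _)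
  · have hs₂ : (Q (X ω) + R (X ω) - 2 * Qstar (X ω)) ^ 2 ≤ (4 * M) ^ 2 :=
      sq_le_sq.2 ((hs (X ω)).trans (le_abs_self _))
    calc _ = (Q (X ω) + R (X ω) - 2 * Qstar (X ω)) ^ 2
          * (((1 - ps (X ω)) / ps (X ω)) ^ 2 * (Q (X ω) - R (X ω)) ^ 2) := by ring
      _ ≤ (4 * M) ^ 2 * (((1 - ps (X ω)) / ps (X ω)) ^ 2 * (Q (X ω) - R (X ω)) ^ 2) := by
          gcongr
      _ = _ := by ring

end AIPW

theorem variance_bound_conditional_second_moment_general {𝒳 Ω Ω' : Type*}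
    [MeasurableSpace 𝒳] [MeasurableSpace Ω] [MeasurableSpace Ω']
    (P : Measure Ω) [IsProbabilityMeasure P]
    (P' : Measure Ω') [IsProbabilityMeasure P']
    (X : Ω → 𝒳) (A : Ω → Bool) (Y : Ω → ℝ)
    (hX : Measurable X) (hA : Measurable A) (hY : Measurable Y)
    (a : Bool) (ps : 𝒳 → ℝ) (hps : Measurable ps)
    (τ : ℝ) (hτ : 0 < τ)
    (hpos : ∀ x, τ ≤ ps x ∧ ps x ≤ 1 - τ)
    (hprop : P[(fun ω => if A ω = a then (1 : ℝ) else 0) |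
        MeasurableSpace.comap X inferInstance] =ᵐ[P] fun ω => ps (X ω))
    (Qstar : 𝒳 → ℝ) (hQstarm : Measurable Qstar)
    (houtcome : P[(fun ω => (if A ω = a then (1 : ℝ) else 0) * Y ω) |
        MeasurableSpace.comap X inferInstance] =ᵐ[P] fun ω => ps (X ω) * Qstar (X ω))
    (hY2 : Integrable (fun ω => (Y ω) ^ 2) P)
    (M : ℝ)
    (Qref : 𝒳 → ℝ) (hQrefm : Measurable Qref) (hQrefb : ∀ x, |Qref x| ≤ M)
    (hQstarb : ∀ x, |Qstar x| ≤ M)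
    (Qhat : Ω' → 𝒳 → ℝ) (hQhatm : Measurable (Function.uncurry Qhat))
    (hQhatb : ∀ᵐ ω' ∂P', ∀ x, |Qhat ω' x| ≤ M)
    (Z : Ω' → ℝ)
    (hZ : ∀ ω', Z ω' = ∫ ω, (Taipw ps a (Qhat ω') (X ω, A ω, Y ω)) ^ 2 ∂P) :
    (∫ ω', (Z ω' - ∫ ω'', Z ω'' ∂P') ^ 2 ∂P')
      ≤ 16 * M ^ 2 * (∫ ω', ∫ ω, ((1 - ps (X ω)) / ps (X ω)) ^ 2
          * (Qhat ω' (X ω) - Qref (X ω)) ^ 2 ∂P ∂P') ∧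
    16 * M ^ 2 * (∫ ω', ∫ ω, ((1 - ps (X ω)) / ps (X ω)) ^ 2
          * (Qhat ω' (X ω) - Qref (X ω)) ^ 2 ∂P ∂P')
      ≤ 16 * M ^ 2 * ((1 - τ) / τ) ^ 2
          * (∫ ω', ∫ ω, (Qhat ω' (X ω) - Qref (X ω)) ^ 2 ∂P ∂P') := by
  obtain rfl : Z = fun ω' => ∫ ω, Taipw ps a (Qhat ω') (X ω, A ω, Y ω) ^ 2 ∂P := funext hZ
  have hpsτ (x : 𝒳) : ps x ∈ Icc τ 1 := ⟨(hpos x).1, by linarith [(hpos x).2]⟩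
  have hY₂ : MemLp Y 2 P := (memLp_two_iff_integrable_sq hY.aestronglyMeasurable).2 hY2
  have hQhat (ω' : Ω') : Measurable (Qhat ω') := hQhatm.comp measurable_prodMk_left
  have hd₂ : ∀ᵐ ω' ∂P', ∀ ω, |(Qhat ω' (X ω) - Qref (X ω)) ^ 2| ≤ (2 * M) ^ 2 := by
    filter_upwards [hQhatb] with ω' hb ω
    rw [abs_of_nonneg (sq_nonneg _)]
    exact sq_le_sq.2 ((abs_sub_le_two_mul (hb _) (hQrefb _)).trans (le_abs_self _))
  have hG := integrable_integral_one_sub_div_sq_mul (P := P) hτ (by fun_prop)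
    (fun ω => hpsτ (X ω)) (F := fun ω' ω => (Qhat ω' (X ω) - Qref (X ω)) ^ 2) (by fun_prop) hd₂
  refine ⟨?_, ?_⟩
  · calc _ ≤ ∫ ω', (∫ ω, Taipw ps a (Qhat ω') (X ω, A ω, Y ω) ^ 2 ∂P
            - ∫ ω, Taipw ps a Qref (X ω, A ω, Y ω) ^ 2 ∂P) ^ 2 ∂P' :=
          integral_sq_sub_integral_le_integral_sq_sub
            (stronglyMeasurable_integral_sq_Taipw hX hA hY hps hQhatm).aestronglyMeasurable _
      _ ≤ ∫ ω', 16 * M ^ 2 * ∫ ω, ((1 - ps (X ω)) / ps (X ω)) ^ 2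
            * (Qhat ω' (X ω) - Qref (X ω)) ^ 2 ∂P ∂P' := by
          refine integral_mono_of_nonneg (ae_of_all _ fun _ => sq_nonneg _) (hG.const_mul _) ?_
          filter_upwards [hQhatb] with ω' hb
          exact sq_integral_sq_Taipw_sub_le hX hA hY₂ hps hτ hpsτ hprop hQstarm hQstarb houtcome
            (hQhat ω') hb hQrefm hQrefb
      _ = _ := integral_const_mul _ _
  · rw [mul_assoc _ (((1 - τ) / τ) ^ 2)]
    exact mul_le_mul_of_nonneg_left (integral_integral_one_sub_div_sq_mul_le hτ (by fun_prop)
      (fun ω => hpsτ (X ω)) (by fun_prop) (fun _ _ => sq_nonneg _) hd₂) (by positivity)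

/-- **Variance bound for the conditional second moment of the transformation of a random
outcome-model estimate** (from Lemma S5).
Let `Q̂` be a random function (on its own probability space `(Ω', P')`), almost surely
bounded by `M`, and let `Z(ω′) := P_* T(Q̂_{ω′})²`.  Then
`E[(Z − E Z)²] ≤ 16M²·E[E_X(((1−π(X))/π(X))²·(Q̂(X) − Q_#(X))²)]
  ≤ 16M²·((1−τ)/τ)²·E‖Q̂ − Q_#‖₂²`. -/
theorem variance_bound_conditional_second_moment {𝒳 Ω Ω' : Type*}
    [MeasurableSpace 𝒳] [MeasurableSpace Ω] [MeasurableSpace Ω']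
    (P : Measure Ω) [IsProbabilityMeasure P]
    (P' : Measure Ω') [IsProbabilityMeasure P']
    (X : Ω → 𝒳) (A : Ω → Bool) (Y : Ω → ℝ)
    (hX : Measurable X) (hA : Measurable A) (hY : Measurable Y)
    (a : Bool) (ps : 𝒳 → ℝ) (hps : Measurable ps)
    (τ : ℝ) (hτ : 0 < τ) (hτ' : τ ≤ 1 / 2)
    (hpos : ∀ x, τ ≤ ps x ∧ ps x ≤ 1 - τ)
    (hprop : P[(fun ω => if A ω = a then (1 : ℝ) else 0) |
        MeasurableSpace.comap X inferInstance] =ᵐ[P] fun ω => ps (X ω))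
    (Qstar : 𝒳 → ℝ) (hQstarm : Measurable Qstar)
    (houtcome : P[(fun ω => (if A ω = a then (1 : ℝ) else 0) * Y ω) |
        MeasurableSpace.comap X inferInstance] =ᵐ[P] fun ω => ps (X ω) * Qstar (X ω))
    (hY2 : Integrable (fun ω => (Y ω) ^ 2) P)
    (M : ℝ) (hM : 0 < M)
    (Qref : 𝒳 → ℝ) (hQrefm : Measurable Qref) (hQrefb : ∀ x, |Qref x| ≤ M)
    (hQstarb : ∀ x, |Qstar x| ≤ M)
    (Qhat : Ω' → 𝒳 → ℝ) (hQhatm : Measurable (Function.uncurry Qhat))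
    (hQhatb : ∀ᵐ ω' ∂P', ∀ x, |Qhat ω' x| ≤ M)
    (Z : Ω' → ℝ)
    (hZ : ∀ ω', Z ω' = ∫ ω, (Taipw ps a (Qhat ω') (X ω, A ω, Y ω)) ^ 2 ∂P) :
    (∫ ω', (Z ω' - ∫ ω'', Z ω'' ∂P') ^ 2 ∂P')
      ≤ 16 * M ^ 2 * (∫ ω', ∫ ω, ((1 - ps (X ω)) / ps (X ω)) ^ 2
          * (Qhat ω' (X ω) - Qref (X ω)) ^ 2 ∂P ∂P') ∧
    16 * M ^ 2 * (∫ ω', ∫ ω, ((1 - ps (X ω)) / ps (X ω)) ^ 2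
          * (Qhat ω' (X ω) - Qref (X ω)) ^ 2 ∂P ∂P')
      ≤ 16 * M ^ 2 * ((1 - τ) / τ) ^ 2
          * (∫ ω', ∫ ω, (Qhat ω' (X ω) - Qref (X ω)) ^ 2 ∂P ∂P') :=
  variance_bound_conditional_second_moment_general P P' X A Y hX hA hY a ps hps τ hτ hpos hprop
    Qstar hQstarm houtcome hY2 M Qref hQrefm hQrefb hQstarb Qhat hQhatm hQhatb Z hZ
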